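/- arXiv:2404.18889 — 5 statements merged into one kernel-verified Lean document; each statement's English description precedes it below -/
import Mathlib

section
/- Let f be convex differentiable with L-Lipschitz gradient, and z_1,…,z_m ∈ ℝ^n with f_i = f(z_i), g_i = ∇f(z_i). Define φ_i(y,g) = f_i + ⟨g_i, y − z_i⟩ + (1/(2L))‖g − g_i‖² and p(y) = min_{g ∈ ℝ^n} max_{i} φ_i(y,g). Then p(y) ≤ f(y) for all y. -/
/-!
Taking `g = ∇f(y)` in the minimum, it suffices that `φ_i(y, ∇f(y)) ≤ f(y)` for every `i`. This is
the interpolation inequality for convex functions with `L`-Lipschitz gradient: apply the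
first-order convexity bound at `z_i` and the descent lemma at `y`, both at the gradient step
`y - (∇f(y) - ∇f(z_i)) / L`, and add them.
-/

open RealInnerProductSpace Set AffineMap

section SmoothConvex

variable {E : Type*} [NormedAddCommGroup E] [InnerProductSpace ℝ E] [CompleteSpace E]
  {f : E → ℝ}

theorem HasGradientAt.hasDerivAt_comp_lineMap {g a b : E} {t : ℝ}
    (hf : HasGradientAt f g (lineMap a b t)) :
    HasDerivAt (f ∘ lineMap a b) ⟪g, b - a⟫ t := by
  simpa [InnerProductSpace.toDual_apply_apply] using
    hf.hasFDerivAt.comp_hasDerivAt t hasDerivAt_lineMap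

theorem ConvexOn.add_inner_le_of_hasGradientAt {g x : E} (hconv : ConvexOn ℝ univ f)
    (hf : HasGradientAt f g x) (w : E) :
    f x + ⟪g, w - x⟫ ≤ f w := by
  have hslope := (hconv.comp_affineMap (lineMap x w)).le_slope_of_hasDerivAt (mem_univ 0)
    (mem_univ 1) one_pos (HasGradientAt.hasDerivAt_comp_lineMap (by rwa [lineMap_apply_zero]))
  simp only [slope_def_field, Function.comp_apply, lineMap_apply_zero, lineMap_apply_one] at hslope
  linarith

theorem le_add_inner_add_sq_norm_of_lipschitz_gradient {f' : E → E}
    (hgrad : ∀ x, HasGradientAt f (f' x) x) {L : ℝ}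
    (hlip : ∀ x y, ‖f' x - f' y‖ ≤ L * ‖x - y‖) (a b : E) :
    f b ≤ f a + ⟪f' a, b - a⟫ + L / 2 * ‖b - a‖ ^ 2 := by
  set ψ : ℝ → ℝ := fun t => L / 2 * ‖b - a‖ ^ 2 * t ^ 2 + ⟪f' a, b - a⟫ * t - (f ∘ lineMap a b) t
  have hψ : ∀ t, HasDerivAt ψ
      (L * ‖b - a‖ ^ 2 * t + ⟪f' a, b - a⟫ - ⟪f' (lineMap a b t), b - a⟫) t := by
    intro t
    have hquad := ((hasDerivAt_pow 2 t).const_mul (L / 2 * ‖b - a‖ ^ 2)).add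
      ((hasDerivAt_id t).const_mul ⟪f' a, b - a⟫)
    have hline := (hgrad (lineMap a b t)).hasDerivAt_comp_lineMap
    exact (hquad.sub hline).congr_deriv (by ring)
  have hmono : MonotoneOn ψ (Ici 0) := by
    refine monotoneOn_of_hasDerivWithinAt_nonneg (convex_Ici 0)
      (fun t _ => (hψ t).continuousAt.continuousWithinAt) (fun t _ => (hψ t).hasDerivWithinAt) ?_
    intro t ht
    rw [interior_Ici, mem_Ioi] at ht
    have hinner : ⟪f' (lineMap a b t) - f' a, b - a⟫ ≤ L * ‖b - a‖ ^ 2 * t := calc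
      _ ≤ ‖f' (lineMap a b t) - f' a‖ * ‖b - a‖ := real_inner_le_norm _ _
      _ ≤ L * ‖lineMap a b t - a‖ * ‖b - a‖ := by gcongr; exact hlip _ _
      _ = L * ‖b - a‖ ^ 2 * t := by
        rw [← vsub_eq_sub, lineMap_vsub_left, norm_smul, Real.norm_of_nonneg ht.le, vsub_eq_sub]
        ring
    rw [inner_sub_left] at hinner
    linarith
  have hψ01 := hmono self_mem_Ici (mem_Ici.2 zero_le_one) zero_le_one
  simp only [ψ, Function.comp_apply, lineMap_apply_zero, lineMap_apply_one] at hψ01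
  linarith

theorem ConvexOn.add_inner_add_sq_norm_gradient_sub_le {f' : E → E} (hconv : ConvexOn ℝ univ f)
    (hgrad : ∀ x, HasGradientAt f (f' x) x) {L : ℝ} (hL : 0 < L)
    (hlip : ∀ x y, ‖f' x - f' y‖ ≤ L * ‖x - y‖) (x y : E) :
    f x + ⟪f' x, y - x⟫ + 1 / (2 * L) * ‖f' y - f' x‖ ^ 2 ≤ f y := by
  set u := f' y - f' x
  have hlower := hconv.add_inner_le_of_hasGradientAt (hgrad x) (y - L⁻¹ • u)
  have hupper := le_add_inner_add_sq_norm_of_lipschitz_gradient hgrad hlip y (y - L⁻¹ • u)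
  have hu : ⟪f' y, u⟫ - ⟪f' x, u⟫ = ‖u‖ ^ 2 := by
    rw [← inner_sub_left, real_inner_self_eq_norm_sq]
  rw [sub_sub_cancel_left, norm_neg, norm_smul, inner_neg_right, real_inner_smul_right,
    Real.norm_of_nonneg (inv_nonneg.2 hL.le)] at hupper
  rw [sub_right_comm, inner_sub_right, real_inner_smul_right] at hlower
  have hquad : L / 2 * (L⁻¹ * ‖u‖) ^ 2 = L⁻¹ / 2 * ‖u‖ ^ 2 := by field_simp
  linear_combination hlower + hupper - L⁻¹ * hu + hquad

end SmoothConvex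

theorem stmt2 (n m : ℕ) (hm : 0 < m) (f : EuclideanSpace ℝ (Fin n) → ℝ)
    (f' : EuclideanSpace ℝ (Fin n) → EuclideanSpace ℝ (Fin n))
    (hconv : ConvexOn ℝ Set.univ f)
    (hgrad : ∀ x, HasGradientAt f (f' x) x)
    (L : ℝ) (hL : 0 < L)
    (hlip : ∀ x y, ‖f' x - f' y‖ ≤ L * ‖x - y‖)
    (z : Fin m → EuclideanSpace ℝ (Fin n))
    (y : EuclideanSpace ℝ (Fin n)) :
    (⨅ g : EuclideanSpace ℝ (Fin n), ⨆ i : Fin m,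
        (f (z i) + ⟪f' (z i), y - z i⟫ + (1/(2*L)) * ‖g - f' (z i)‖^2)) ≤ f y := by
  let i₀ : Fin m := ⟨0, hm⟩
  have : Nonempty (Fin m) := ⟨i₀⟩
  have hbdd : BddBelow (range fun g : EuclideanSpace ℝ (Fin n) => ⨆ i : Fin m,
      (f (z i) + ⟪f' (z i), y - z i⟫ + (1/(2*L)) * ‖g - f' (z i)‖^2)) := by
    refine ⟨f (z i₀) + ⟪f' (z i₀), y - z i₀⟫, forall_mem_range.2 fun g => ?_⟩
    refine le_trans ?_ (le_ciSup (Finite.bddAbove_range _) i₀)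
    have : 0 ≤ 1 / (2 * L) * ‖g - f' (z i₀)‖ ^ 2 := by positivity
    linarith
  exact (ciInf_le hbdd (f' y)).trans <| ciSup_le fun i =>
    hconv.add_inner_add_sq_norm_gradient_sub_le hgrad hL hlip (z i) y
end

section
/- For any y ∈ ℝ^n, p(y) = min_g max_i φ_i(y,g) equals max_{λ ∈ Δ_m} [ Σ_i λ_i ( f_i + ⟨g_i, y − z_i⟩ + (1/(2L))‖g_i‖² ) − (1/(2L))‖Σ_i λ_i g_i‖² ], with the inner minimizer given by g* = Σ_i λ*_i g_i for any optimal λ*. -/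
/-!
Write `ḡ = ∑ λᵢ gᵢ`. For weights `λ` in the simplex the weighted average of the quadratics
`aᵢ + c‖g - gᵢ‖²` equals the dual objective `D(λ)` plus `c‖g - ḡ‖²`, so `D(λ)` is a lower bound for
the upper envelope at every `g` (weak duality). Conversely, `D` is a concave quadratic on the simplex,
and comparing a maximizer `λ*` with `λ* + t (μ - λ*)` for `t → 0⁺` gives the first-order condition
`∑ μᵢ (aᵢ + c‖ḡ* - gᵢ‖²) ≤ D(λ*)`; with `μ` a vertex this says the envelope at `ḡ*` is at most
`D(λ*)`. A maximizer exists because the simplex is compact.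
-/

open RealInnerProductSpace Filter Topology

section MaxOfQuadratics

variable {ι E : Type*} [Fintype ι] [NormedAddCommGroup E] [InnerProductSpace ℝ E]

noncomputable def primalObj (a : ι → ℝ) (c : ℝ) (v : ι → E) (g : E) : ℝ :=
  ⨆ i, (a i + c * ‖g - v i‖ ^ 2)

noncomputable def dualObj (a : ι → ℝ) (c : ℝ) (v : ι → E) (lam : ι → ℝ) : ℝ :=
  ∑ i, lam i * (a i + c * ‖v i‖ ^ 2) - c * ‖∑ i, lam i • v i‖ ^ 2

variable (a : ι → ℝ) (c : ℝ) (v : ι → E)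

theorem sum_mul_add_norm_sub_sq_eq_dualObj_add {lam : ι → ℝ} (hsum : ∑ i, lam i = 1) (g : E) :
    ∑ i, lam i * (a i + c * ‖g - v i‖ ^ 2)
      = dualObj a c v lam + c * ‖g - ∑ i, lam i • v i‖ ^ 2 := by
  have hinner : ⟪g, ∑ i, lam i • v i⟫ = ∑ i, lam i * ⟪g, v i⟫ := by
    simp only [inner_sum, real_inner_smul_right]
  have hexpand : ∀ i, lam i * (a i + c * ‖g - v i‖ ^ 2)
      = lam i * (a i + c * ‖v i‖ ^ 2) + c * ‖g‖ ^ 2 * lam i - 2 * c * (lam i * ⟪g, v i⟫) := by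
    intro i
    rw [norm_sub_sq_real]
    ring
  rw [Finset.sum_congr rfl fun i _ => hexpand i]
  simp only [Finset.sum_sub_distrib, Finset.sum_add_distrib, ← Finset.mul_sum, hsum, dualObj,
    norm_sub_sq_real g, hinner]
  ring

theorem dualObj_le_primalObj {c : ℝ} (hc : 0 ≤ c) {lam : ι → ℝ} (hlam : lam ∈ stdSimplex ℝ ι)
    (g : E) : dualObj a c v lam ≤ primalObj a c v g := by
  obtain ⟨hnonneg, hsum⟩ := hlam
  calc dualObj a c v lam
      ≤ dualObj a c v lam + c * ‖g - ∑ i, lam i • v i‖ ^ 2 := by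
        have : 0 ≤ c * ‖g - ∑ i, lam i • v i‖ ^ 2 := by positivity
        linarith
    _ = ∑ i, lam i * (a i + c * ‖g - v i‖ ^ 2) :=
        (sum_mul_add_norm_sub_sq_eq_dualObj_add a c v hsum g).symm
    _ ≤ ∑ i, lam i * primalObj a c v g :=
        Finset.sum_le_sum fun i _ => mul_le_mul_of_nonneg_left
          (le_ciSup (Finite.bddAbove_range fun j => a j + c * ‖g - v j‖ ^ 2) i) (hnonneg i)
    _ = primalObj a c v g := by rw [← Finset.sum_mul, hsum, one_mul]

theorem dualObj_add_smul_sub (lam : ι → ℝ) {mu : ι → ℝ} (hmu : ∑ i, mu i = 1) (t : ℝ) :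
    dualObj a c v (lam + t • (mu - lam))
      = dualObj a c v lam
        + t * (∑ i, mu i * (a i + c * ‖∑ j, lam j • v j - v i‖ ^ 2) - dualObj a c v lam)
        - c * t ^ 2 * ‖∑ i, mu i • v i - ∑ i, lam i • v i‖ ^ 2 := by
  set gbar := ∑ i, lam i • v i
  set w := ∑ i, mu i • v i - gbar
  have hvec : ∑ i, (lam + t • (mu - lam)) i • v i = gbar + t • w := by
    simp only [Pi.add_apply, Pi.smul_apply, Pi.sub_apply, smul_eq_mul, add_smul, sub_smul,
      mul_smul, Finset.sum_add_distrib, Finset.sum_sub_distrib, ← Finset.smul_sum, w, gbar]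
  have hlin : ∑ i, (lam + t • (mu - lam)) i * (a i + c * ‖v i‖ ^ 2)
      = ∑ i, lam i * (a i + c * ‖v i‖ ^ 2)
        + t * (∑ i, mu i * (a i + c * ‖v i‖ ^ 2) - ∑ i, lam i * (a i + c * ‖v i‖ ^ 2)) := by
    simp only [Pi.add_apply, Pi.smul_apply, Pi.sub_apply, smul_eq_mul, add_mul, sub_mul,
      mul_assoc, Finset.sum_add_distrib, Finset.sum_sub_distrib, ← Finset.mul_sum, mul_sub]
  have hmu_avg : ∑ i, mu i * (a i + c * ‖gbar - v i‖ ^ 2)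
      = dualObj a c v mu + c * ‖w‖ ^ 2 := by
    rw [sum_mul_add_norm_sub_sq_eq_dualObj_add a c v hmu, ← norm_neg]
    simp only [w, neg_sub]
  have hmu_vec : ∑ i, mu i • v i = gbar + w := by simp only [w, add_sub_cancel]
  rw [hmu_avg]
  simp only [dualObj, hvec, hlin]
  rw [hmu_vec, norm_add_sq_real, norm_add_sq_real, norm_smul, real_inner_smul_right,
    Real.norm_eq_abs, mul_pow, sq_abs]
  ring

theorem sum_mul_add_norm_sub_sq_le_dualObj_of_isMaxOn {lam : ι → ℝ}
    (hlam : lam ∈ stdSimplex ℝ ι) (hmax : IsMaxOn (dualObj a c v) (stdSimplex ℝ ι) lam)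
    {mu : ι → ℝ} (hmu : mu ∈ stdSimplex ℝ ι) :
    ∑ i, mu i * (a i + c * ‖∑ j, lam j • v j - v i‖ ^ 2) ≤ dualObj a c v lam := by
  set δ := ∑ i, mu i * (a i + c * ‖∑ j, lam j • v j - v i‖ ^ 2) - dualObj a c v lam
  set K := c * ‖∑ i, mu i • v i - ∑ i, lam i • v i‖ ^ 2
  -- `t δ - K t² ≤ 0` on `(0, 1)`, so `δ ≤ K t` there; let `t → 0⁺`.
  have hbound : ∀ t ∈ Set.Ioo (0 : ℝ) 1, δ ≤ K * t := by
    rintro t ⟨ht0, ht1⟩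
    have hmem := (convex_stdSimplex ℝ ι).add_smul_sub_mem hlam hmu ⟨ht0.le, ht1.le⟩
    have hle : dualObj a c v (lam + t • (mu - lam)) ≤ dualObj a c v lam := hmax hmem
    rw [dualObj_add_smul_sub a c v lam hmu.2 t] at hle
    nlinarith
  have hlim : Tendsto (fun t => K * t) (𝓝[>] 0) (𝓝 0) := by
    simpa using tendsto_nhdsWithin_of_tendsto_nhds
      ((continuous_const_mul K).tendsto (0 : ℝ))
  have := ge_of_tendsto hlim (eventually_of_mem (Ioo_mem_nhdsGT one_pos) hbound)
  linarith

theorem primalObj_le_dualObj_of_isMaxOn [Nonempty ι] {lam : ι → ℝ} (hlam : lam ∈ stdSimplex ℝ ι)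
    (hmax : IsMaxOn (dualObj a c v) (stdSimplex ℝ ι) lam) :
    primalObj a c v (∑ j, lam j • v j) ≤ dualObj a c v lam := by
  classical
  refine ciSup_le fun i => ?_
  simpa [Pi.single_apply] using
    sum_mul_add_norm_sub_sq_le_dualObj_of_isMaxOn a c v hlam hmax (single_mem_stdSimplex ℝ i)

variable {c}

theorem primalObj_eq_dualObj_of_isMaxOn [Nonempty ι] (hc : 0 ≤ c) {lam : ι → ℝ}
    (hlam : lam ∈ stdSimplex ℝ ι) (hmax : IsMaxOn (dualObj a c v) (stdSimplex ℝ ι) lam) :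
    primalObj a c v (∑ j, lam j • v j) = dualObj a c v lam :=
  (primalObj_le_dualObj_of_isMaxOn a c v hlam hmax).antisymm
    (dualObj_le_primalObj a v hc hlam _)

theorem iInf_primalObj_eq_dualObj_of_isMaxOn [Nonempty ι] (hc : 0 ≤ c) {lam : ι → ℝ}
    (hlam : lam ∈ stdSimplex ℝ ι) (hmax : IsMaxOn (dualObj a c v) (stdSimplex ℝ ι) lam) :
    ⨅ g, primalObj a c v g = dualObj a c v lam := by
  refine le_antisymm ?_ (le_ciInf (dualObj_le_primalObj a v hc hlam))
  rw [← primalObj_eq_dualObj_of_isMaxOn a v hc hlam hmax]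
  exact ciInf_le ⟨_, Set.forall_mem_range.2 (dualObj_le_primalObj a v hc hlam)⟩ _

variable (c)

theorem continuous_dualObj : Continuous (dualObj a c v) := by
  unfold dualObj
  fun_prop

theorem exists_isMaxOn_dualObj [Nonempty ι] :
    ∃ lam ∈ stdSimplex ℝ ι, IsMaxOn (dualObj a c v) (stdSimplex ℝ ι) lam := by
  classical
  exact (isCompact_stdSimplex ℝ ι).exists_isMaxOn
    ⟨_, single_mem_stdSimplex ℝ (Classical.arbitrary ι)⟩ (continuous_dualObj a c v).continuousOn

variable {c}

theorem iInf_primalObj_eq_iSup_dualObj [Nonempty ι] (hc : 0 ≤ c) :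
    ⨅ g, primalObj a c v g = ⨆ lam : {l : ι → ℝ // l ∈ stdSimplex ℝ ι}, dualObj a c v lam.1 := by
  obtain ⟨lam, hlam, hmax⟩ := exists_isMaxOn_dualObj a c v
  rw [iInf_primalObj_eq_dualObj_of_isMaxOn a v hc hlam hmax, hmax.iSup_eq hlam]

end MaxOfQuadratics

theorem stmt5 (n m : ℕ) (hm : 0 < m)
    (z : Fin m → EuclideanSpace ℝ (Fin n)) (fv : Fin m → ℝ)
    (gv : Fin m → EuclideanSpace ℝ (Fin n)) (L : ℝ) (hL : 0 < L)
    (y : EuclideanSpace ℝ (Fin n)) :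
    ((⨅ g : EuclideanSpace ℝ (Fin n), ⨆ i : Fin m,
        (fv i + ⟪gv i, y - z i⟫ + (1/(2*L)) * ‖g - gv i‖^2))
      = ⨆ lam : {l : Fin m → ℝ // l ∈ stdSimplex ℝ (Fin m)},
          ((∑ i, lam.1 i * (fv i + ⟪gv i, y - z i⟫ + (1/(2*L)) * ‖gv i‖^2))
            - (1/(2*L)) * ‖∑ i, lam.1 i • gv i‖^2)) ∧
    (∀ lamstar ∈ stdSimplex ℝ (Fin m),
      (∀ mu ∈ stdSimplex ℝ (Fin m),
          ((∑ i, mu i * (fv i + ⟪gv i, y - z i⟫ + (1/(2*L)) * ‖gv i‖^2))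
              - (1/(2*L)) * ‖∑ i, mu i • gv i‖^2)
            ≤ ((∑ i, lamstar i * (fv i + ⟪gv i, y - z i⟫ + (1/(2*L)) * ‖gv i‖^2))
              - (1/(2*L)) * ‖∑ i, lamstar i • gv i‖^2)) →
      (⨆ i : Fin m, (fv i + ⟪gv i, y - z i⟫
            + (1/(2*L)) * ‖(∑ j, lamstar j • gv j) - gv i‖^2))
        = ⨅ g : EuclideanSpace ℝ (Fin n), ⨆ i : Fin m,
            (fv i + ⟪gv i, y - z i⟫ + (1/(2*L)) * ‖g - gv i‖^2)) := by
  have : Nonempty (Fin m) := Fin.pos_iff_nonempty.mp hm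
  have hc : 0 ≤ 1 / (2 * L) := by positivity
  let a : Fin m → ℝ := fun i => fv i + ⟪gv i, y - z i⟫
  refine ⟨iInf_primalObj_eq_iSup_dualObj a gv hc, fun lam hlam hmax => ?_⟩
  exact (primalObj_eq_dualObj_of_isMaxOn a gv hc hlam hmax).trans
    (iInf_primalObj_eq_dualObj_of_isMaxOn a gv hc hlam hmax).symm
end

section
/- Let ρ(y,λ) = ⟨λ, G^T y − f_*⟩ + (1/(2L))(⟨λ, diag(C)⟩ − ⟨λ, Cλ⟩) with C = G^T G. Let T be an m×m̃ matrix whose columns lie in Δ_m, and define G̃ = GT, f̃_* = T^T f_*, C̃ = T^T C T, and ρ̃(y,λ̃) = ⟨λ̃, G̃^T y − f̃_*⟩ + (1/(2L))(⟨λ̃, diag(C̃)⟩ − ⟨λ̃, C̃λ̃⟩). Then max_{λ̃ ∈ Δ_{m̃}} ρ̃(y,λ̃) ≤ max_{λ ∈ Δ_m} ρ(y,λ) for every y ∈ ℝ^n. -/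
/-! Pushing `λ̃ ∈ Δ_m̃` forward to `λ = T λ̃ ∈ Δ_m` leaves the linear and quadratic terms of the
objective unchanged, since `G̃ λ̃ = G λ`. The diagonal term can only grow: `diag(C̃)_j = ‖G T_j‖²`,
and as `T_j` is a probability vector, Jensen's inequality for `x ↦ x²` gives
`‖G T_j‖² ≤ ∑ᵢ T_ij ‖G_i‖² = (Tᵀ diag C)_j`. Hence `ρ̃(y, λ̃) ≤ ρ(y, T λ̃)`. -/

open Matrix Finset

namespace Matrix

variable {ι κ μ : Type*}

theorem diag_transpose_mul_self [Fintype ι] {R : Type*} [CommSemiring R] (A : Matrix ι κ R)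
    (j : κ) :
    (Aᵀ * A).diag j = ∑ k, A k j ^ 2 := by
  simp only [diag, mul_apply, transpose_apply, sq]

theorem mulVec_mem_stdSimplex [Fintype κ] [Fintype μ] {R : Type*} [CommSemiring R]
    [PartialOrder R] [IsOrderedRing R]
    {T : Matrix κ μ R} (hT : ∀ j, (fun i => T i j) ∈ stdSimplex R κ) {l : μ → R}
    (hl : l ∈ stdSimplex R μ) : T *ᵥ l ∈ stdSimplex R κ := by
  refine ⟨fun i => sum_nonneg fun j _ => mul_nonneg ((hT j).1 i) (hl.1 j), ?_⟩
  calc ∑ i, (T *ᵥ l) i = ∑ j, (∑ i, T i j) * l j := by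
        simp only [mulVec, dotProduct, sum_mul]
        exact sum_comm
    _ = 1 := by simp only [fun j => (hT j).2, one_mul, hl.2]

theorem diag_gram_mul_le [Fintype ι] [Fintype κ] (G : Matrix ι κ ℝ) {T : Matrix κ μ ℝ}
    (hT : ∀ j, (fun i => T i j) ∈ stdSimplex ℝ κ) :
    ((G * T)ᵀ * (G * T)).diag ≤ Tᵀ *ᵥ (Gᵀ * G).diag := by
  intro j
  have jensen : ∀ k, (∑ i, T i j * G k i) ^ 2 ≤ ∑ i, T i j * G k i ^ 2 := fun k =>
    (even_two.convexOn_pow (𝕜 := ℝ)).map_sum_le (fun i _ => (hT j).1 i) (hT j).2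
      (fun _ _ => Set.mem_univ _)
  calc ((G * T)ᵀ * (G * T)).diag j = ∑ k, (∑ i, T i j * G k i) ^ 2 := by
        simp only [diag_transpose_mul_self, mul_apply, mul_comm]
    _ ≤ ∑ k, ∑ i, T i j * G k i ^ 2 := sum_le_sum fun k _ => jensen k
    _ = (Tᵀ *ᵥ (Gᵀ * G).diag) j := by
        simp only [mulVec, dotProduct, transpose_apply, diag_transpose_mul_self, mul_sum]
        exact sum_comm

theorem dotProduct_diag_gram_mul_le [Fintype ι] [Fintype κ] [Fintype μ] (G : Matrix ι κ ℝ)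
    {T : Matrix κ μ ℝ}
    (hT : ∀ j, (fun i => T i j) ∈ stdSimplex ℝ κ) {l : μ → ℝ} (hl : 0 ≤ l) :
    l ⬝ᵥ ((G * T)ᵀ * (G * T)).diag ≤ (T *ᵥ l) ⬝ᵥ (Gᵀ * G).diag :=
  calc l ⬝ᵥ ((G * T)ᵀ * (G * T)).diag ≤ l ⬝ᵥ (Tᵀ *ᵥ (Gᵀ * G).diag) :=
        dotProduct_le_dotProduct_of_nonneg_left (diag_gram_mul_le G hT) hl
    _ = (T *ᵥ l) ⬝ᵥ (Gᵀ * G).diag := by rw [dotProduct_mulVec, vecMul_transpose]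

end Matrix

section DualObjective

variable {ι κ μ : Type*} [Fintype ι] [Fintype κ] [Fintype μ]

/-- The paper's `ρ(y, λ)`, with `C = GᵀG`. -/
noncomputable def dualObjective (G : Matrix ι κ ℝ) (f : κ → ℝ) (L : ℝ) (y : ι → ℝ)
    (l : κ → ℝ) : ℝ :=
  l ⬝ᵥ (Gᵀ *ᵥ y - f) + (1 / (2 * L)) * (l ⬝ᵥ (Gᵀ * G).diag - l ⬝ᵥ ((Gᵀ * G) *ᵥ l))

theorem dualObjective_mul_le (G : Matrix ι κ ℝ) (f : κ → ℝ) {L : ℝ} (hL : 0 ≤ L) (y : ι → ℝ)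
    {T : Matrix κ μ ℝ} (hT : ∀ j, (fun i => T i j) ∈ stdSimplex ℝ κ) {l : μ → ℝ} (hl : 0 ≤ l) :
    dualObjective (G * T) (Tᵀ *ᵥ f) L y l ≤ dualObjective G f L y (T *ᵥ l) := by
  have linear_eq : l ⬝ᵥ ((G * T)ᵀ *ᵥ y - Tᵀ *ᵥ f) = (T *ᵥ l) ⬝ᵥ (Gᵀ *ᵥ y - f) := by
    rw [transpose_mul, ← mulVec_mulVec, ← mulVec_sub, dotProduct_mulVec, vecMul_transpose]
  have quadratic_eq :
      l ⬝ᵥ (((G * T)ᵀ * (G * T)) *ᵥ l) = (T *ᵥ l) ⬝ᵥ ((Gᵀ * G) *ᵥ (T *ᵥ l)) := by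
    rw [transpose_mul, ← mulVec_mulVec, ← mulVec_mulVec, ← mulVec_mulVec, mulVec_mulVec _ Gᵀ,
      dotProduct_mulVec, vecMul_transpose]
  unfold dualObjective
  rw [linear_eq, quadratic_eq]
  gcongr
  exact dotProduct_diag_gram_mul_le G hT hl

theorem continuous_dualObjective (G : Matrix ι κ ℝ) (f : κ → ℝ) (L : ℝ) (y : ι → ℝ) :
    Continuous (dualObjective G f L y) := by
  unfold dualObjective
  fun_prop

theorem bddAbove_range_dualObjective (G : Matrix ι κ ℝ) (f : κ → ℝ) (L : ℝ) (y : ι → ℝ) :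
    BddAbove (Set.range fun l : stdSimplex ℝ κ => dualObjective G f L y l) :=
  (isCompact_range ((continuous_dualObjective G f L y).comp continuous_subtype_val)).bddAbove

end DualObjective

theorem stmt7_general (n m mt : ℕ) (hmt : 0 < mt)
    (G : Matrix (Fin n) (Fin m) ℝ) (fstar : Fin m → ℝ) (L : ℝ) (hL : 0 < L)
    (T : Matrix (Fin m) (Fin mt) ℝ)
    (hT : ∀ j, (fun i => T i j) ∈ stdSimplex ℝ (Fin m))
    (y : Fin n → ℝ) :
    (⨆ lt : {l : Fin mt → ℝ // l ∈ stdSimplex ℝ (Fin mt)},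
        (lt.1 ⬝ᵥ ((G * T)ᵀ *ᵥ y - Tᵀ *ᵥ fstar)
          + (1/(2*L)) * (lt.1 ⬝ᵥ (Tᵀ * (Gᵀ * G) * T).diag
              - lt.1 ⬝ᵥ ((Tᵀ * (Gᵀ * G) * T) *ᵥ lt.1))))
    ≤ ⨆ l : {l : Fin m → ℝ // l ∈ stdSimplex ℝ (Fin m)},
        (l.1 ⬝ᵥ (Gᵀ *ᵥ y - fstar)
          + (1/(2*L)) * (l.1 ⬝ᵥ (Gᵀ * G).diag - l.1 ⬝ᵥ ((Gᵀ * G) *ᵥ l.1))) := by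
  have : Nonempty {l : Fin mt → ℝ // l ∈ stdSimplex ℝ (Fin mt)} :=
    ⟨⟨_, single_mem_stdSimplex ℝ ⟨0, hmt⟩⟩⟩
  have gram_eq : Tᵀ * (Gᵀ * G) * T = (G * T)ᵀ * (G * T) := by
    simp only [transpose_mul, Matrix.mul_assoc]
  simp_rw [gram_eq]
  change ⨆ lt : stdSimplex ℝ (Fin mt), dualObjective (G * T) (Tᵀ *ᵥ fstar) L y lt
    ≤ ⨆ l : stdSimplex ℝ (Fin m), dualObjective G fstar L y l
  exact ciSup_mono_of_forall_exists (bddAbove_range_dualObjective G fstar L y) fun lt =>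
    ⟨⟨T *ᵥ lt, mulVec_mem_stdSimplex hT lt.2⟩, dualObjective_mul_le G fstar hL.le y hT lt.2.1⟩

theorem stmt7 (n m mt : ℕ) (hm : 0 < m) (hmt : 0 < mt)
    (G : Matrix (Fin n) (Fin m) ℝ) (fstar : Fin m → ℝ) (L : ℝ) (hL : 0 < L)
    (T : Matrix (Fin m) (Fin mt) ℝ)
    (hT : ∀ j, (fun i => T i j) ∈ stdSimplex ℝ (Fin m))
    (y : Fin n → ℝ) :
    (⨆ lt : {l : Fin mt → ℝ // l ∈ stdSimplex ℝ (Fin mt)},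
        (lt.1 ⬝ᵥ ((G * T)ᵀ *ᵥ y - Tᵀ *ᵥ fstar)
          + (1/(2*L)) * (lt.1 ⬝ᵥ (Tᵀ * (Gᵀ * G) * T).diag
              - lt.1 ⬝ᵥ ((Tᵀ * (Gᵀ * G) * T) *ᵥ lt.1))))
    ≤ ⨆ l : {l : Fin m → ℝ // l ∈ stdSimplex ℝ (Fin m)},
        (l.1 ⬝ᵥ (Gᵀ *ᵥ y - fstar)
          + (1/(2*L)) * (l.1 ⬝ᵥ (Gᵀ * G).diag - l.1 ⬝ᵥ ((Gᵀ * G) *ᵥ l.1))) :=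
  stmt7_general n m mt hmt G fstar L hL T hT y
end

section
/- Suppose u(x) = u* + (1/(2a))‖x − x_+‖² satisfies u(y) ≤ f(y) + (1/(2a))‖y − x̄‖² for all y and f(x_+) ≤ u*, with a > 0. Then for all y ∈ ℝ^n, (1/2)‖x_+ − y‖² ≤ (1/2)‖x̄ − y‖² + a(f(y) − f(x_+)). -/
theorem stmt14 (n : ℕ) (f : EuclideanSpace ℝ (Fin n) → ℝ)
    (xbar xplus : EuclideanSpace ℝ (Fin n)) (a : ℝ) (ha : 0 < a) (ustar : ℝ)
    (h1 : ∀ y, ustar + (1/(2*a)) * ‖y - xplus‖^2 ≤ f y + (1/(2*a)) * ‖y - xbar‖^2)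
    (h2 : f xplus ≤ ustar) :
    ∀ y, (1/2) * ‖xplus - y‖^2 ≤ (1/2) * ‖xbar - y‖^2 + a * (f y - f xplus) := by
  intro y
  have h := h1 y
  rw [norm_sub_rev xplus y, norm_sub_rev xbar y]
  have ha' : (2*a) > 0 := by linarith
  have h2a : (2*a) ≠ 0 := ne_of_gt ha'
  have h' := mul_le_mul_of_nonneg_right h ha'.le
  have e1 : (ustar + 1 / (2*a) * ‖y - xplus‖^2) * (2*a) = ustar*(2*a) + ‖y - xplus‖^2 := by
    field_simp
  have e2 : (f y + 1 / (2*a) * ‖y - xbar‖^2) * (2*a) = f y*(2*a) + ‖y - xbar‖^2 := by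
    field_simp
  rw [e1, e2] at h'
  nlinarith [h']
end

section
/- If iterates x_0, x_1, …, x_k satisfy (1/2)‖x_{i+1} − y‖² ≤ (1/2)‖x_i − y‖² + a_{i+1}(f(y) − f(x_{i+1})) for all y and all i < k, with a_{i+1} > 0 and f(x_{i+1}) ≤ f(x_i), then f(x_k) − f(x*) ≤ ‖x_0 − x*‖² / (2 A_k) where A_k = Σ_{i=1}^k a_i and x* is any minimizer of f. -/
theorem stmt15 (n : ℕ) (f : EuclideanSpace ℝ (Fin n) → ℝ)
    (hconv : ConvexOn ℝ Set.univ f)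
    (xstar : EuclideanSpace ℝ (Fin n)) (hmin : ∀ y, f xstar ≤ f y)
    (x : ℕ → EuclideanSpace ℝ (Fin n)) (a : ℕ → ℝ) (k : ℕ) (hk : 1 ≤ k)
    (ha : ∀ i < k, 0 < a (i+1))
    (hdesc : ∀ i < k, f (x (i+1)) ≤ f (x i))
    (hiter : ∀ i < k, ∀ y, (1/2) * ‖x (i+1) - y‖^2
        ≤ (1/2) * ‖x i - y‖^2 + a (i+1) * (f y - f (x (i+1)))) :
    f (x k) - f xstar ≤ ‖x 0 - xstar‖^2 / (2 * ∑ i ∈ Finset.range k, a (i+1)) := by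
  have hApos : 0 < ∑ i ∈ Finset.range k, a (i+1) := by
    apply Finset.sum_pos (fun i hi => ha i (Finset.mem_range.mp hi))
    rw [Finset.nonempty_range_iff]; omega
  have chain : ∀ m j, m ≤ j → j ≤ k → f (x j) ≤ f (x m) := by
    intro m j hmj hjk
    induction j, hmj using Nat.le_induction with
    | base => exact le_rfl
    | succ j hmj ih => exact (hdesc j (by omega)).trans (ih (by omega))
  have key : ∀ m, m ≤ k →
      (1/2) * ‖x m - xstar‖^2 +
        (∑ i ∈ Finset.range m, a (i+1)) * (f (x k) - f xstar)
      ≤ (1/2) * ‖x 0 - xstar‖^2 := by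
    intro m hm
    induction m with
    | zero => simp
    | succ m ih =>
      have ih' := ih (by omega)
      have h1 := hiter m (by omega) xstar
      have h2 : a (m+1) * (f (x k) - f xstar)
          ≤ a (m+1) * (f (x (m+1)) - f xstar) := by
        apply mul_le_mul_of_nonneg_left _ (le_of_lt (ha m (by omega)))
        have := chain (m+1) k (by omega) le_rfl
        linarith
      have h3 : a (m+1) * (f xstar - f (x (m+1)))
          = -(a (m+1) * (f (x (m+1)) - f xstar)) := by ring
      rw [Finset.sum_range_succ, add_mul]
      linarith
  have hkk := key k le_rfl
  have hnn : (0:ℝ) ≤ ‖x k - xstar‖^2 := sq_nonneg _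
  rw [le_div_iff₀ (by positivity)]
  nlinarith
end
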